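/- arXiv:2503.01503 — 2 statements merged into one kernel-verified Lean document; each statement's English description precedes it below -/
import Mathlib

section
/- The characteristic function φ_Z of Z satisfies, for every θ ∈ ℝ, the functional equation φ_Z(θ) = e^{i(1+Λ²)θ} · p↓ / (1 − p↑ φ_Z(Λ² θ)). -/
open MeasureTheory Filter Finset

/-- The law of the level Markov chain on `ℕ` which, from state `0`, moves to `1` with
probability `puu` and stays at `0` with probability `1 - puu`, and from a state `j > 0`,
moves to `j+1` with probability `pu`, to `j-1` with probability `pd`, and stays at `j`
with probability `1 - pu - pd`; with initial distribution `ν`.  The law is characterized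
by its finite-dimensional distributions. -/
def IsLevelChainLaw (puu pu pd : ℝ) (ν : Measure ℕ) (P : Measure (ℕ → ℕ)) : Prop :=
  ∀ (n : ℕ) (a : ℕ → ℕ),
    P {ω | ∀ i ≤ n, ω i = a i} =
      ν {a 0} * ENNReal.ofReal (∏ i ∈ Finset.range n,
        (if a i = 0 then (if a (i + 1) = 1 then puu else if a (i + 1) = 0 then 1 - puu else 0)
         else if a (i + 1) = a i + 1 then pu
         else if a (i + 1) + 1 = a i then pd
         else if a (i + 1) = a i then 1 - pu - pd
         else 0))

/-- First return time of the path `ω` to level `0`. -/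
noncomputable def tau0 (ω : ℕ → ℕ) : ℕ := sInf {j | 1 ≤ j ∧ ω j = 0}

/-- `Z := Σ_{j=0}^{τ₀−1} Λ^{2 L_j}`. -/
noncomputable def Zvar (Λ : ℝ) (ω : ℕ → ℕ) : ℝ :=
  ∑ j ∈ Finset.range (tau0 ω), Λ ^ (2 * ω j)

/-- The characteristic function `φ_Z(θ) = E₀[e^{iθZ}]` of `Z` under the law `P0`. -/
noncomputable def phiZ (Λ : ℝ) (P0 : Measure (ℕ → ℕ)) (θ : ℝ) : ℂ :=
  ∫ ω, Complex.exp (Complex.I * (θ : ℂ) * ((Zvar Λ ω : ℝ) : ℂ)) ∂P0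

/-!
Paths from `0` up to their first return to `0` are coded by binary trees: such an excursion is
either `0 → 1 → 0`, or it is `0 → 1`, followed by an excursion lifted by one level, followed by
the remainder of an excursion from `1` back to `0`. Along this decomposition the probability of
the excursion is multiplicative (with an extra factor `p↑` for the lifted part) and `Z` becomes
`Λ² Z_b + Z_c`. Summing over trees gives `φ(θ) = p↓ e^{i(1+Λ²)θ} + p↑ φ(Λ²θ) φ(θ)`, provided
the cylinder events of the trees exhaust the path space. Their total mass `S ≤ 1` satisfies
`S = p↓ + p↑ S²`, whose roots are `1` and `p↓ / p↑ > 1`, so `S = 1`.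
-/

theorem integral_eq_tsum_of_eqOn {X E ι : Type*} [MeasurableSpace X] [NormedAddCommGroup E]
    [NormedSpace ℝ E] [CompleteSpace E] [Countable ι] {μ : Measure X} [IsFiniteMeasure μ]
    {s : ι → Set X} {f : X → E} {c : ι → E} {C : ℝ} (hs : ∀ i, MeasurableSet (s i))
    (hd : Pairwise (Function.onFun Disjoint s)) (hcover : ∀ᵐ x ∂μ, x ∈ ⋃ i, s i)
    (hf : ∀ i, Set.EqOn f (fun _ => c i) (s i)) (hC : ∀ x, ‖f x‖ ≤ C) :
    ∫ x, f x ∂μ = ∑' i, μ.real (s i) • c i := by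
  have hmeas : AEStronglyMeasurable f (μ.restrict (⋃ i, s i)) :=
    aestronglyMeasurable_iUnion_iff.2 fun i => aestronglyMeasurable_const.congr
      ((ae_restrict_iff' (hs i)).2 (ae_of_all _ fun x hx => (hf i hx).symm))
  calc ∫ x, f x ∂μ = ∫ x in ⋃ i, s i, f x ∂μ := by
        rw [Measure.restrict_eq_self_of_ae_mem hcover]
    _ = ∑' i, ∫ x in s i, f x ∂μ :=
      integral_iUnion hs hd (Integrable.of_bound hmeas C (ae_of_all _ hC))
    _ = ∑' i, μ.real (s i) • c i :=
      tsum_congr fun i => by rw [setIntegral_congr_fun (hs i) (hf i), setIntegral_const]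

theorem eq_one_of_eq_add_mul_self {p q S : ℝ} (hp : 0 ≤ p) (hpq : p < q) (hsum : p + q = 1)
    (hS : S ≤ 1) (h : S = q + p * (S * S)) : S = 1 := by
  have hfactor : (S - 1) * (p * S - q) = 0 := by linear_combination (-S) * hsum - h
  have hneg : p * S - q < 0 := by nlinarith
  linarith [(mul_eq_zero.1 hfactor).resolve_right hneg.ne]

theorem norm_phiZ_le_one (Λ : ℝ) (P : Measure (ℕ → ℕ)) [IsProbabilityMeasure P] (θ : ℝ) :
    ‖phiZ Λ P θ‖ ≤ 1 := by
  rw [phiZ]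
  simpa using norm_integral_le_of_norm_le_const (μ := P) (C := 1) (ae_of_all _ fun ω => by
    rw [mul_assoc, ← Complex.ofReal_mul, Complex.norm_exp_I_mul_ofReal])

inductive Excursion : Type
  | down : Excursion
  | up : Excursion → Excursion → Excursion

namespace Excursion

def length : Excursion → ℕ
  | down => 2
  | up b c => b.length + c.length

/-- `up b c` visits `0`, then `b` lifted by one level, then `c` without its first step `0 → 1`. -/
def path : Excursion → ℕ → ℕ
  | down, i => if i = 1 then 1 else 0
  | up b c, i =>
    if i = 0 then 0 else if i ≤ b.length + 1 then b.path (i - 1) + 1 else c.path (i - b.length)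

def weight (pu pd : ℝ) : Excursion → ℝ
  | down => pd
  | up b c => pu * b.weight pu pd * c.weight pu pd

def zvar (Λ : ℝ) : Excursion → ℝ
  | down => 1 + Λ ^ 2
  | up b c => Λ ^ 2 * b.zvar Λ + c.zvar Λ

theorem two_le_length (e : Excursion) : 2 ≤ e.length := by
  induction e with
  | down => exact le_rfl
  | up b c hb _ => simp only [length]; omega

theorem path_zero (e : Excursion) : e.path 0 = 0 := by
  cases e <;> simp [path]

theorem path_up_add_one {b c : Excursion} {i : ℕ} (h : i ≤ b.length) :
    (up b c).path (i + 1) = b.path i + 1 := by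
  simp [path, h]

theorem path_one (e : Excursion) : e.path 1 = 1 := by
  cases e with
  | down => simp [path]
  | up b c => simpa [path_zero] using path_up_add_one (c := c) (Nat.zero_le b.length)

theorem path_up_of_lt {b c : Excursion} {i : ℕ} (h : b.length + 1 < i) :
    (up b c).path i = c.path (i - b.length) := by
  simp [path, show i ≠ 0 by omega, show ¬ i ≤ b.length + 1 by omega]

theorem path_length (e : Excursion) : e.path e.length = 0 := by
  induction e with
  | down => simp [path, length]
  | up b c _ ihc =>
    rw [length, path_up_of_lt (by have := two_le_length c; omega), Nat.add_sub_cancel_left, ihc]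

theorem path_up_add_length {b c : Excursion} {i : ℕ} (h : 1 ≤ i) :
    (up b c).path (i + b.length) = c.path i := by
  rcases h.eq_or_lt with rfl | h
  · rw [add_comm, path_up_add_one le_rfl, path_length, path_one]
  · rw [path_up_of_lt (by omega), Nat.add_sub_cancel]

theorem path_pos {e : Excursion} {i : ℕ} (h0 : 0 < i) (hi : i < e.length) : 0 < e.path i := by
  induction e generalizing i with
  | down =>
    obtain rfl : i = 1 := by simp only [length] at hi; omega
    simp [path]
  | up b c _ ihc =>
    simp only [length] at hi
    by_cases hb : i ≤ b.length + 1
    · obtain ⟨j, rfl⟩ := Nat.exists_eq_add_of_lt h0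
      rw [zero_add, path_up_add_one (by omega)]
      exact Nat.succ_pos _
    · obtain ⟨j, rfl⟩ := Nat.exists_eq_add_of_le (show b.length ≤ i by omega)
      rw [add_comm, path_up_add_length (by omega)]
      exact ihc (by omega) (by omega)

theorem eq_of_path_eq {e e' : Excursion}
    (h : ∀ i ≤ min e.length e'.length, e.path i = e'.path i) : e = e' := by
  induction e generalizing e' with
  | down =>
    cases e' with
    | down => rfl
    | up b c =>
      have := two_le_length b; have := two_le_length c
      have h2 := h 2 (by simp only [length]; omega)
      rw [path_up_add_one (by omega), path_one] at h2
      simp [path] at h2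
  | up b c ihb ihc =>
    cases e' with
    | down =>
      have := two_le_length b; have := two_le_length c
      have h2 := h 2 (by simp only [length]; omega)
      rw [path_up_add_one (by omega), path_one] at h2
      simp [path] at h2
    | up b' c' =>
      have := two_le_length c; have := two_le_length c'
      obtain rfl : b = b' := ihb fun i hi => by
        have hi' := h (i + 1) (by simp only [length]; omega)
        rwa [path_up_add_one (by omega), path_up_add_one (by omega), Nat.add_right_cancel_iff]
          at hi'
      obtain rfl : c = c' := ihc fun i hi => by
        rcases Nat.eq_zero_or_pos i with rfl | hi0
        · rw [path_zero, path_zero]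
        · have hi' := h (i + b.length) (by simp only [length]; omega)
          rwa [path_up_add_length hi0, path_up_add_length hi0] at hi'
      rfl

@[to_additive]
theorem prod_range_length {M : Type*} [CommMonoid M] (F : ℕ → ℕ → M) (e : Excursion) :
    ∏ i ∈ range e.length, F (e.path i) (e.path (i + 1)) =
      F 0 1 * ∏ i ∈ range (e.length - 1), F (e.path (i + 1)) (e.path (i + 2)) := by
  obtain ⟨n, hn⟩ : ∃ n, e.length = n + 1 := ⟨e.length - 1, by have := two_le_length e; omega⟩
  rw [hn, prod_range_succ', path_zero, path_one, mul_comm, Nat.add_sub_cancel]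

@[to_additive]
theorem prod_range_length_up {M : Type*} [CommMonoid M] (F : ℕ → ℕ → M) (b c : Excursion) :
    ∏ i ∈ range (up b c).length, F ((up b c).path i) ((up b c).path (i + 1)) =
      F 0 1 * (∏ i ∈ range b.length, F (b.path i + 1) (b.path (i + 1) + 1)) *
        ∏ i ∈ range (c.length - 1), F (c.path (i + 1)) (c.path (i + 2)) := by
  have := two_le_length c
  rw [prod_range_length, show (up b c).length - 1 = b.length + (c.length - 1) by
    simp only [length]; omega, prod_range_add, mul_assoc]
  congr 2
  · refine prod_congr rfl fun i hi => ?_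
    have := mem_range.mp hi
    rw [path_up_add_one (by omega), path_up_add_one (by omega)]
  · refine prod_congr rfl fun i _ => ?_
    rw [show b.length + i + 1 = i + 1 + b.length by omega,
      show b.length + i + 2 = i + 2 + b.length by omega,
      path_up_add_length (by omega), path_up_add_length (by omega)]

theorem sum_range_length_pow (Λ : ℝ) (e : Excursion) :
    ∑ i ∈ range e.length, Λ ^ (2 * e.path i) = e.zvar Λ := by
  have split := fun e => sum_range_length (fun x _ => Λ ^ (2 * x)) e
  have split_up := sum_range_length_up (fun x _ => Λ ^ (2 * x))
  induction e with
  | down => simp [length, path, zvar, sum_range_succ]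
  | up b c ihb ihc =>
    have hlift : ∀ x, Λ ^ (2 * (x + 1)) = Λ ^ 2 * Λ ^ (2 * x) := fun x => by ring
    rw [split_up, zvar, ← ihb, ← ihc, split c]
    simp only [hlift, ← mul_sum]
    ring

/-- The factor of `IsLevelChainLaw 1 pu pd`, copied verbatim so that the law applies to
cylinders by unfolding. -/
def levelStep (pu pd : ℝ) (x y : ℕ) : ℝ :=
  if x = 0 then (if y = 1 then 1 else if y = 0 then 1 - 1 else 0)
  else if y = x + 1 then pu else if y + 1 = x then pd else if y = x then 1 - pu - pd else 0

theorem levelStep_zero_one (pu pd : ℝ) : levelStep pu pd 0 1 = 1 := by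
  simp [levelStep]

theorem levelStep_succ_succ (pu pd : ℝ) {x : ℕ} (y : ℕ) (hx : 0 < x) :
    levelStep pu pd (x + 1) (y + 1) = levelStep pu pd x y := by
  simp only [levelStep, Nat.add_right_cancel_iff, Nat.add_eq_zero_iff, one_ne_zero, and_false,
    if_false, hx.ne']

theorem prod_range_length_levelStep (pu pd : ℝ) (e : Excursion) :
    ∏ i ∈ range e.length, levelStep pu pd (e.path i) (e.path (i + 1)) = e.weight pu pd := by
  induction e with
  | down => simp [length, path, weight, prod_range_succ, levelStep]
  | up b c ihb ihc =>
    rw [prod_range_length_up, weight, ← ihb, ← ihc,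
      prod_range_length (fun x y => levelStep pu pd (x + 1) (y + 1)), prod_range_length _ b,
      prod_range_length _ c, levelStep_zero_one]
    have hstep : levelStep pu pd (0 + 1) (1 + 1) = pu := by simp [levelStep]
    have hshift := prod_congr rfl fun i (hi : i ∈ range (b.length - 1)) =>
      levelStep_succ_succ pu pd (b.path (i + 2))
        (path_pos (e := b) (Nat.succ_pos i) (by have := mem_range.mp hi; omega))
    rw [hstep, hshift]
    ring

theorem weight_nonneg {pu pd : ℝ} (hpu : 0 ≤ pu) (hpd : 0 ≤ pd) (e : Excursion) :
    0 ≤ e.weight pu pd := by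
  induction e with
  | down => exact hpd
  | up b c ihb ihc => exact mul_nonneg (mul_nonneg hpu ihb) ihc

def toNat : Excursion → ℕ
  | down => 0
  | up b c => Nat.pair b.toNat c.toNat + 1

theorem toNat_injective : Function.Injective toNat := by
  intro e e' h
  induction e generalizing e' with
  | down => cases e' <;> simp_all [toNat]
  | up b c ihb ihc =>
    cases e' with
    | down => simp [toNat] at h
    | up b' c' =>
      simp only [toNat, Nat.add_right_cancel_iff, Nat.pair_eq_pair] at h
      rw [ihb h.1, ihc h.2]

instance : Countable Excursion := toNat_injective.countable

theorem uncurry_up_injective : Function.Injective (Function.uncurry up) := by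
  rintro ⟨b, c⟩ ⟨b', c'⟩ h
  cases h
  rfl

theorem tsum_eq_down_add_mul {R : Type*} [NormedRing R] [CompleteSpace R]
    {f g h : Excursion → R} (a : R) (hup : ∀ b c, h (up b c) = a * (f b * g c))
    (hf : Summable (‖f ·‖)) (hg : Summable (‖g ·‖)) (hh : Summable h) :
    ∑' e, h e = h down + a * ((∑' e, f e) * ∑' e, g e) := by
  classical
  have hsupp : Function.support (fun e => if e = down then 0 else h e) ⊆
      Set.range (Function.uncurry up) := by
    rintro (_ | ⟨b, c⟩) he
    · simp at he
    · exact ⟨(b, c), rfl⟩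
  rw [hh.tsum_eq_add_tsum_ite down, tsum_mul_tsum_of_summable_norm hf hg,
    ← (summable_mul_of_summable_norm hf hg).tsum_mul_left,
    ← uncurry_up_injective.tsum_eq hsupp]
  exact congrArg _ (tsum_congr fun ⟨b, c⟩ => by simp [hup])

def cylinder (e : Excursion) : Set (ℕ → ℕ) := {ω | ∀ i ≤ e.length, ω i = e.path i}

theorem measurableSet_cylinder (e : Excursion) : MeasurableSet e.cylinder := by
  simp only [cylinder, Set.ofPred_forall]
  exact .iInter fun i => .iInter fun _ => measurableSet_eq_fun (measurable_pi_apply i)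
    measurable_const

theorem pairwise_disjoint_cylinder : Pairwise (Function.onFun Disjoint cylinder) := by
  refine fun e e' hne => Set.disjoint_left.2 fun ω h h' => hne (eq_of_path_eq fun i hi => ?_)
  rw [← h i (hi.trans (min_le_left _ _)), h' i (hi.trans (min_le_right _ _))]

theorem tau0_of_mem_cylinder {e : Excursion} {ω : ℕ → ℕ} (h : ω ∈ e.cylinder) :
    tau0 ω = e.length := by
  have hmem : e.length ∈ {j | 1 ≤ j ∧ ω j = 0} :=
    ⟨by have := two_le_length e; omega, by rw [h _ le_rfl, path_length]⟩
  refine le_antisymm (Nat.sInf_le hmem) (le_csInf ⟨_, hmem⟩ fun j ⟨hj1, hj0⟩ => ?_)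
  by_contra! hj
  rw [h j hj.le] at hj0
  exact (path_pos hj1 hj).ne' hj0

theorem Zvar_of_mem_cylinder (Λ : ℝ) {e : Excursion} {ω : ℕ → ℕ} (h : ω ∈ e.cylinder) :
    Zvar Λ ω = e.zvar Λ := by
  rw [Zvar, tau0_of_mem_cylinder h, ← sum_range_length_pow]
  exact sum_congr rfl fun j hj => by rw [h j (mem_range.mp hj).le]

theorem measure_cylinder {pu pd : ℝ} {P : Measure (ℕ → ℕ)}
    (hP : IsLevelChainLaw 1 pu pd (Measure.dirac 0) P) (e : Excursion) :
    P e.cylinder = ENNReal.ofReal (e.weight pu pd) := by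
  have h : P e.cylinder = Measure.dirac 0 {e.path 0} *
      ENNReal.ofReal (∏ i ∈ range e.length, levelStep pu pd (e.path i) (e.path (i + 1))) :=
    hP e.length e.path
  rw [h, prod_range_length_levelStep, path_zero, Measure.dirac_apply_of_mem (Set.mem_singleton 0),
    one_mul]

noncomputable def charSummand (Λ pu pd t : ℝ) (e : Excursion) : ℂ :=
  (e.weight pu pd : ℂ) * Complex.exp (Complex.I * ((e.zvar Λ * t : ℝ) : ℂ))

variable {pu pd : ℝ}

theorem norm_charSummand {Λ : ℝ} (hpu : 0 ≤ pu) (hpd : 0 ≤ pd) (t : ℝ) (e : Excursion) :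
    ‖charSummand Λ pu pd t e‖ = e.weight pu pd := by
  rw [charSummand, norm_mul, Complex.norm_exp_I_mul_ofReal, mul_one, Complex.norm_real,
    Real.norm_of_nonneg (weight_nonneg hpu hpd e)]

theorem charSummand_up {Λ : ℝ} (t : ℝ) (b c : Excursion) :
    charSummand Λ pu pd t (up b c) =
      pu * (charSummand Λ pu pd (Λ ^ 2 * t) b * charSummand Λ pu pd t c) := by
  simp only [charSummand, weight, zvar]
  rw [show (((Λ ^ 2 * b.zvar Λ + c.zvar Λ) * t : ℝ) : ℂ) =
      ((b.zvar Λ * (Λ ^ 2 * t) : ℝ) : ℂ) + ((c.zvar Λ * t : ℝ) : ℂ) by push_cast; ring,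
    mul_add, Complex.exp_add]
  push_cast
  ring

theorem tsum_charSummand (Λ : ℝ) (hpu : 0 ≤ pu) (hpd : 0 ≤ pd) (hw : Summable (weight pu pd))
    (t : ℝ) :
    ∑' e, charSummand Λ pu pd t e = charSummand Λ pu pd t down +
      pu * ((∑' e, charSummand Λ pu pd (Λ ^ 2 * t) e) * ∑' e, charSummand Λ pu pd t e) := by
  have hnorm : ∀ s, Summable (‖charSummand Λ pu pd s ·‖) := fun s => by
    simpa only [norm_charSummand hpu hpd] using hw
  exact tsum_eq_down_add_mul _ (charSummand_up t) (hnorm _) (hnorm t) (hnorm t).of_norm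

end Excursion

open Excursion

section LevelChain

variable {pu pd : ℝ} {P : Measure (ℕ → ℕ)}

theorem measure_iUnion_cylinder (hP : IsLevelChainLaw 1 pu pd (Measure.dirac 0) P) :
    P (⋃ e, cylinder e) = ∑' e, ENNReal.ofReal (weight pu pd e) := by
  rw [measure_iUnion pairwise_disjoint_cylinder measurableSet_cylinder]
  exact tsum_congr (measure_cylinder hP)

theorem summable_weight [IsFiniteMeasure P] (hP : IsLevelChainLaw 1 pu pd (Measure.dirac 0) P)
    (hpu : 0 ≤ pu) (hpd : 0 ≤ pd) : Summable (weight pu pd) :=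
  (ENNReal.summable_toReal (measure_iUnion_cylinder hP ▸ measure_ne_top P _)).congr fun e =>
    ENNReal.toReal_ofReal (weight_nonneg hpu hpd e)

theorem ofReal_tsum_weight [IsFiniteMeasure P] (hP : IsLevelChainLaw 1 pu pd (Measure.dirac 0) P)
    (hpu : 0 ≤ pu) (hpd : 0 ≤ pd) :
    ENNReal.ofReal (∑' e, weight pu pd e) = P (⋃ e, cylinder e) := by
  rw [ENNReal.ofReal_tsum_of_nonneg (weight_nonneg hpu hpd) (summable_weight hP hpu hpd),
    measure_iUnion_cylinder hP]

theorem tsum_weight_eq_one [IsProbabilityMeasure P]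
    (hP : IsLevelChainLaw 1 pu pd (Measure.dirac 0) P) (hpu : 0 < pu) (hlt : pu < pd)
    (hsum : pu + pd = 1) : ∑' e, weight pu pd e = 1 := by
  have hpd : 0 ≤ pd := (hpu.trans hlt).le
  have hw := summable_weight hP hpu.le hpd
  have hnorm : Summable (‖weight pu pd ·‖) := by
    simpa only [Real.norm_of_nonneg (weight_nonneg hpu.le hpd _)] using hw
  refine eq_one_of_eq_add_mul_self hpu.le hlt hsum ?_
    (tsum_eq_down_add_mul pu (fun _ _ => mul_assoc _ _ _) hnorm hnorm hw)
  rw [← ENNReal.ofReal_le_one, ofReal_tsum_weight hP hpu.le hpd]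
  exact prob_le_one

theorem ae_mem_iUnion_cylinder [IsProbabilityMeasure P]
    (hP : IsLevelChainLaw 1 pu pd (Measure.dirac 0) P) (hpu : 0 < pu) (hlt : pu < pd)
    (hsum : pu + pd = 1) : ∀ᵐ ω ∂P, ω ∈ ⋃ e, cylinder e := by
  refine (prob_compl_eq_zero_iff (.iUnion measurableSet_cylinder)).2 ?_
  rw [← ofReal_tsum_weight hP hpu.le (hpu.trans hlt).le, tsum_weight_eq_one hP hpu hlt hsum,
    ENNReal.ofReal_one]

theorem phiZ_eq_tsum_charSummand [IsProbabilityMeasure P]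
    (hP : IsLevelChainLaw 1 pu pd (Measure.dirac 0) P) (Λ : ℝ) (hpu : 0 < pu) (hlt : pu < pd)
    (hsum : pu + pd = 1) (t : ℝ) :
    phiZ Λ P t = ∑' e, charSummand Λ pu pd t e := by
  rw [phiZ, integral_eq_tsum_of_eqOn measurableSet_cylinder pairwise_disjoint_cylinder
    (ae_mem_iUnion_cylinder hP hpu hlt hsum)
    (c := fun e => Complex.exp (Complex.I * ((e.zvar Λ * t : ℝ) : ℂ)))
    (fun e ω hω => by simp only [Zvar_of_mem_cylinder Λ hω]; push_cast; ring_nf)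
    (fun ω => by rw [mul_assoc, ← Complex.ofReal_mul, Complex.norm_exp_I_mul_ofReal])]
  refine tsum_congr fun e => ?_
  rw [measureReal_def, measure_cylinder hP,
    ENNReal.toReal_ofReal (weight_nonneg hpu.le (hpu.trans hlt).le e), Complex.real_smul,
    charSummand]

end LevelChain

theorem phiZ_functional_equation_general (Λ pu pd : ℝ)
    (hpu : 0 < pu) (hpd : 0 < pd) (hpu1 : pu < 1) (hsum : pu + pd = 1)
    (hratio1 : 1 < pd / pu)
    (P0 : Measure (ℕ → ℕ)) [IsProbabilityMeasure P0]
    (hP0 : IsLevelChainLaw 1 pu pd (Measure.dirac 0) P0) :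
    ∀ θ : ℝ, phiZ Λ P0 θ =
      Complex.exp (Complex.I * (((1 + Λ ^ 2) * θ : ℝ) : ℂ)) * (pd : ℂ) /
        (1 - (pu : ℂ) * phiZ Λ P0 (Λ ^ 2 * θ)) := by
  intro θ
  have hlt : pu < pd := (one_lt_div hpu).mp hratio1
  have hsplit := tsum_charSummand Λ hpu.le hpd.le (summable_weight hP0 hpu.le hpd.le) θ
  rw [← phiZ_eq_tsum_charSummand hP0 Λ hpu hlt hsum,
    ← phiZ_eq_tsum_charSummand hP0 Λ hpu hlt hsum] at hsplit
  have hnorm : ‖(pu : ℂ) * phiZ Λ P0 (Λ ^ 2 * θ)‖ < 1 := by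
    rw [norm_mul, Complex.norm_real, Real.norm_of_nonneg hpu.le]
    exact (mul_le_of_le_one_right hpu.le (norm_phiZ_le_one Λ P0 _)).trans_lt hpu1
  have hden : 1 - (pu : ℂ) * phiZ Λ P0 (Λ ^ 2 * θ) ≠ 0 :=
    sub_ne_zero.2 fun h => by simp [← h] at hnorm
  rw [eq_div_iff hden]
  simp only [charSummand, weight, zvar] at hsplit
  linear_combination hsplit

/-- The characteristic function `φ_Z` of `Z` satisfies, for every `θ ∈ ℝ`,
the functional equation `φ_Z(θ) = e^{i(1+Λ²)θ} · p↓ / (1 − p↑ φ_Z(Λ² θ))`. -/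
theorem phiZ_functional_equation (Λ pu pd : ℝ) (hΛ : 1 < Λ)
    (hpu : 0 < pu) (hpd : 0 < pd) (hpu1 : pu < 1) (hpd1 : pd < 1) (hsum : pu + pd = 1)
    (hratio1 : 1 < pd / pu) (hratio2 : pd / pu < Λ ^ 2)
    (P0 : Measure (ℕ → ℕ)) [IsProbabilityMeasure P0]
    (hP0 : IsLevelChainLaw 1 pu pd (Measure.dirac 0) P0) :
    ∀ θ : ℝ, phiZ Λ P0 θ =
      Complex.exp (Complex.I * (((1 + Λ ^ 2) * θ : ℝ) : ℂ)) * (pd : ℂ) /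
        (1 - (pu : ℂ) * phiZ Λ P0 (Λ ^ 2 * θ)) :=
  phiZ_functional_equation_general Λ pu pd hpu hpd hpu1 hsum hratio1 P0 hP0
end

section
/- Let (Z_k)_{k≥1} be i.i.d. random variables distributed as Z under P₀, and let (a_n)_{n∈ℕ} be any sequence of positive reals with a_n → 0. Then (a_n² / n^{2/α}) Σ_{k=1}^n Z_k → 0 in P₀-probability, and (a_n² / n^{2/α}) V_n → 0 in P₀-probability, as n → ∞. -/
open MeasureTheory Filter Finset Topology

open MeasureTheory Filter Finset

/-- `ℓ(θ) := (1 − φ_Z(θ)) / |θ|^{α/2}` for `θ ≠ 0`. -/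
noncomputable def ellZ (Λ α : ℝ) (P0 : Measure (ℕ → ℕ)) (θ : ℝ) : ℂ :=
  (1 - phiZ Λ P0 θ) / ((|θ| ^ (α / 2) : ℝ) : ℂ)


/-- `V_n := Σ_{j=0}^{n−1} Λ^{2 L_j}`. -/
noncomputable def Vvar (Λ : ℝ) (n : ℕ) (ω : ℕ → ℕ) : ℝ :=
  ∑ j ∈ Finset.range n, Λ ^ (2 * ω j)

/-!
Everything reduces to truncated first moments. For nonnegative summands
`min (∑ xᵢ) b ≤ ∑ min xᵢ b`, and Markov's inequality for `min S b` gives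
`P(S ≥ b) ≤ E[min S b] / b`. So it suffices that `E[min Z b]` and `E[min V_n b] / n` are
`O(b ^ (1 - α/2))`: with `b = ε n^{2/α} / a_n²` one has `n b^{-α/2} = ε^{-α/2} a_n^α → 0`.

For the level chain, `π 0 = 1`, `π l = ρ^l / p↑` with `ρ = p↑/p↓ = Λ^{-α}` is an invariant
measure, and the chain started at `0` stays below it: every marginal `P(L_j = l)`, and also the
expected number of visits to `l` before the return time `τ₀`, is at most `π l`. Both truncated
moments are therefore bounded by `∑ₗ min(Λ^{2l}, b) ρ^l / p↑`. Cutting this sum at the first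
level with `Λ^{2l} ≥ b` leaves a geometric sum with ratio `Λ^{2-α} > 1` below the cut and one
with ratio `Λ^{-α} < 1` above it, each of size `O(b^{1-α/2})`.
-/

open scoped ENNReal

theorem min_sum_le_sum_min {ι M : Type*} [AddCommMonoid M] [LinearOrder M]
    [IsOrderedAddMonoid M] [CanonicallyOrderedAdd M] (s : Finset ι) (x : ι → M) (b : M) :
    min (∑ i ∈ s, x i) b ≤ ∑ i ∈ s, min (x i) b := by
  by_cases h : ∃ i ∈ s, b ≤ x i
  · obtain ⟨i, hi, hbi⟩ := h
    calc min (∑ i ∈ s, x i) b ≤ min (x i) b := by rw [min_eq_right hbi]; exact min_le_right _ _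
      _ ≤ ∑ i ∈ s, min (x i) b := single_le_sum (f := fun i => min (x i) b) (fun _ _ => zero_le) hi
  · push Not at h
    rw [sum_congr rfl fun i hi => min_eq_left (h i hi).le]
    exact min_le_left _ _

theorem min_enorm_sum_le {ι E : Type*} [NormedAddCommGroup E] (s : Finset ι) (f : ι → E)
    (b : ℝ≥0∞) : min ‖∑ i ∈ s, f i‖ₑ b ≤ ∑ i ∈ s, min ‖f i‖ₑ b :=
  (min_le_min_right b (enorm_sum_le s f)).trans (min_sum_le_sum_min s _ b)

theorem tendstoInMeasure_zero_of_lintegral_min_le {Ω : Type*} [MeasurableSpace Ω]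
    {μ : Measure Ω} {S : ℕ → Ω → ℝ} (hS : ∀ n, AEMeasurable (S n) μ) {c : ℕ → ℝ} {C β : ℝ}
    (hbound : ∀ n (b : ℝ), 0 < b →
      ∫⁻ ω, min ‖S n ω‖ₑ (ENNReal.ofReal b) ∂μ ≤ n * ENNReal.ofReal (C * b ^ (1 - β)))
    (hc : Tendsto (fun n : ℕ => n * |c n| ^ β) atTop (𝓝 0)) :
    TendstoInMeasure μ (fun n ω => c n * S n ω) atTop (fun _ => 0) := by
  rw [tendstoInMeasure_iff_norm]
  intro ε hε
  have hlim : Tendsto (fun n : ℕ => ENNReal.ofReal (C * ε ^ (-β) * (n * |c n| ^ β)))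
      atTop (𝓝 0) := by
    simpa using ENNReal.tendsto_ofReal (hc.const_mul (C * ε ^ (-β)))
  refine tendsto_of_tendsto_of_tendsto_of_le_of_le tendsto_const_nhds hlim (fun _ => zero_le)
    fun n => ?_
  rcases eq_or_ne (c n) 0 with hc0 | hc0
  · simp [hc0, hε.not_ge]
  have hc0' : 0 < |c n| := abs_pos.mpr hc0
  set b := ε / |c n| with hb_def
  have hb : 0 < b := div_pos hε hc0'
  calc μ {ω | ε ≤ ‖c n * S n ω - 0‖}
      ≤ μ {ω | ENNReal.ofReal b ≤ min ‖S n ω‖ₑ (ENNReal.ofReal b)} := by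
        refine measure_mono fun ω hω => ?_
        refine (le_min ?_ le_rfl : _ ≤ min ‖S n ω‖ₑ _)
        rw [Set.mem_ofPred_eq, sub_zero, norm_mul, Real.norm_eq_abs, ← div_le_iff₀' hc0'] at hω
        rw [Real.enorm_eq_ofReal_abs]
        exact ENNReal.ofReal_le_ofReal hω
    _ ≤ (∫⁻ ω, min ‖S n ω‖ₑ (ENNReal.ofReal b) ∂μ) / ENNReal.ofReal b :=
        meas_ge_le_lintegral_div ((hS n).enorm.min aemeasurable_const)
          (by simpa using hb) ENNReal.ofReal_ne_top
    _ ≤ n * ENNReal.ofReal (C * b ^ (1 - β)) / ENNReal.ofReal b := by gcongr; exact hbound n b hb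
    _ = ENNReal.ofReal (C * ε ^ (-β) * (n * |c n| ^ β)) := by
        rw [← ENNReal.ofReal_natCast, ← ENNReal.ofReal_mul n.cast_nonneg,
          ← ENNReal.ofReal_div_of_pos hb]
        congr 1
        rw [Real.rpow_sub hb, Real.rpow_one, hb_def, Real.div_rpow hε.le hc0'.le,
          Real.rpow_neg hε.le]
        field_simp

theorem lintegral_min_enorm_sum_le_of_map_eq {Ω Ω' ι E : Type*} [MeasurableSpace Ω]
    [MeasurableSpace Ω'] [NormedAddCommGroup E] [MeasurableSpace E] [OpensMeasurableSpace E]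
    {μ : Measure Ω} {ν : Measure Ω'} {X : ι → Ω' → E}
    (hX : ∀ k, Measurable (X k)) {Y : Ω → E} (hXY : ∀ k, ν.map (X k) = μ.map Y)
    (s : Finset ι) (b : ℝ≥0∞) :
    ∫⁻ ω', min ‖∑ k ∈ s, X k ω'‖ₑ b ∂ν ≤ #s * ∫⁻ ω, min ‖Y ω‖ₑ b ∂μ := by
  have hg : Measurable fun x : E => min ‖x‖ₑ b := measurable_enorm.min measurable_const
  calc ∫⁻ ω', min ‖∑ k ∈ s, X k ω'‖ₑ b ∂ν ≤ ∫⁻ ω', ∑ k ∈ s, min ‖X k ω'‖ₑ b ∂ν :=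
        lintegral_mono fun _ => min_enorm_sum_le _ _ _
    _ = ∑ k ∈ s, ∫⁻ x, min ‖x‖ₑ b ∂(μ.map Y) := by
        rw [lintegral_finsetSum _ fun k _ => (hX k).enorm.min measurable_const]
        exact sum_congr rfl fun k _ => by rw [← hXY k, lintegral_map hg (hX k)]
    _ ≤ ∑ k ∈ s, ∫⁻ ω, min ‖Y ω‖ₑ b ∂μ := sum_le_sum fun _ _ => lintegral_map_le _ _
    _ = #s * ∫⁻ ω, min ‖Y ω‖ₑ b ∂μ := by rw [sum_const, nsmul_eq_mul]

theorem setLIntegral_comp_eq_tsum {Ω β : Type*} [MeasurableSpace Ω] [MeasurableSpace β]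
    [Countable β] [MeasurableSingletonClass β] (μ : Measure Ω) {X : Ω → β} (hX : Measurable X)
    (A : Set Ω) (h : β → ℝ≥0∞) :
    ∫⁻ ω in A, h (X ω) ∂μ = ∑' y, h y * μ (X ⁻¹' {y} ∩ A) := by
  rw [← lintegral_map (measurable_of_countable h) hX, lintegral_countable']
  congr! 2 with y
  rw [Measure.map_apply hX (measurableSet_singleton y),
    Measure.restrict_apply (hX (measurableSet_singleton y))]

theorem tsum_min_pow_mul_pow_le {r ρ b : ℝ} (hr : 0 ≤ r) (hρ0 : 0 ≤ ρ) (hρ1 : ρ < 1)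
    (hb : 0 ≤ b) (m : ℕ) :
    ∑' l : ℕ, min (ENNReal.ofReal (r ^ l)) (ENNReal.ofReal b) * ENNReal.ofReal (ρ ^ l)
      ≤ ENNReal.ofReal (∑ l ∈ range m, (r * ρ) ^ l + b * ρ ^ m / (1 - ρ)) := by
  rw [← ENNReal.summable.sum_add_tsum_nat_add' (k := m),
    ENNReal.ofReal_add (by positivity) (by have := hρ1; positivity)]
  gcongr
  · calc _ ≤ ∑ l ∈ range m, ENNReal.ofReal ((r * ρ) ^ l) := sum_le_sum fun l _ => by
          rw [mul_pow, ENNReal.ofReal_mul (by positivity)]; gcongr; exact min_le_left _ _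
      _ = _ := (ENNReal.ofReal_sum_of_nonneg fun l _ => by positivity).symm
  · calc _ ≤ ∑' l, ENNReal.ofReal (b * ρ ^ m * ρ ^ l) := ENNReal.tsum_le_tsum fun l => by
          rw [mul_assoc, ← pow_add, add_comm m, ENNReal.ofReal_mul hb]
          gcongr; exact min_le_right _ _
      _ = _ := by
          rw [← ENNReal.ofReal_tsum_of_nonneg (fun l => by positivity)
            ((summable_geometric_of_lt_one hρ0 hρ1).mul_left _),
            tsum_mul_left, tsum_geometric_of_lt_one hρ0 hρ1, div_eq_mul_inv]

theorem tsum_min_pow_mul_rpow_le {r β b : ℝ} (hr : 1 < r) (hβ0 : 0 < β) (hβ1 : β < 1)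
    (hb : 0 < b) :
    ∑' l : ℕ, min (ENNReal.ofReal (r ^ l)) (ENNReal.ofReal b) * ENNReal.ofReal ((r ^ (-β)) ^ l)
      ≤ ENNReal.ofReal ((r ^ (1 - β) / (r ^ (1 - β) - 1) + (1 - r ^ (-β))⁻¹) * b ^ (1 - β)) := by
  set q := r ^ (1 - β)
  set ρ := r ^ (-β)
  have hr0 : 0 < r := by linarith
  have hq : 1 < q := Real.one_lt_rpow hr (by linarith)
  have hρ1 : ρ < 1 := Real.rpow_lt_one_of_one_lt_of_neg hr (by linarith)
  have hrρ : r * ρ = q := by rw [← Real.rpow_one_add' hr0.le (by linarith), ← sub_eq_add_neg]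
  have hpow : ∀ (x : ℝ) (l : ℕ), (r ^ x) ^ l = (r ^ l) ^ x := fun x l => by
    rw [← Real.rpow_mul_natCast hr0.le, ← Real.rpow_natCast_mul hr0.le, mul_comm]
  have hex : ∃ m : ℕ, b ≤ r ^ m := (pow_unbounded_of_one_lt b hr).imp fun _ => le_of_lt
  set m := Nat.find hex
  have hlow : q ^ m - 1 ≤ q * b ^ (1 - β) := by
    rcases Nat.eq_zero_or_pos m with h | h
    · rw [h, pow_zero, sub_self]; positivity
    · have hlt : r ^ (m - 1) < b := lt_of_not_ge (Nat.find_min hex (by omega))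
      have : q ^ (m - 1) ≤ b ^ (1 - β) := by
        rw [hpow]; exact Real.rpow_le_rpow (by positivity) hlt.le (by linarith)
      calc q ^ m - 1 ≤ q * q ^ (m - 1) := by rw [← pow_succ', Nat.sub_add_cancel h]; linarith
        _ ≤ q * b ^ (1 - β) := by gcongr
  have hhigh : b * ρ ^ m ≤ b ^ (1 - β) := by
    rw [hpow, Real.rpow_sub hb, Real.rpow_one, div_eq_mul_inv, ← Real.rpow_neg hb.le]
    exact mul_le_mul_of_nonneg_left
      (Real.rpow_le_rpow_of_nonpos hb (Nat.find_spec hex) (by linarith)) hb.le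
  refine (tsum_min_pow_mul_pow_le hr0.le (by positivity) hρ1 hb.le m).trans
    (ENNReal.ofReal_le_ofReal ?_)
  rw [hrρ, geom_sum_eq hq.ne', add_mul, div_mul_eq_mul_div, inv_mul_eq_div]
  gcongr

namespace LevelChain

noncomputable def kernel (pu pd : ℝ) (k l : ℕ) : ℝ≥0∞ :=
  if k = 0 then (if l = 1 then 1 else 0)
  else if l = k + 1 then ENNReal.ofReal pu
  else if l + 1 = k then ENNReal.ofReal pd
  else 0

noncomputable def invariantMeasure (pu pd : ℝ) (l : ℕ) : ℝ≥0∞ :=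
  if l = 0 then 1 else ENNReal.ofReal ((pu / pd) ^ l / pu)

variable {pu pd : ℝ}

theorem tsum_mul_kernel (v : ℕ → ℝ≥0∞) (l : ℕ) :
    ∑' k, v k * kernel pu pd k l
      = v (l - 1) * kernel pu pd (l - 1) l + v (l + 1) * ENNReal.ofReal pd := by
  rw [tsum_eq_sum (s := {l - 1, l + 1}) fun k hk => ?_, sum_pair (by omega)]
  · have : l ≠ l + 1 + 1 := by omega
    simp [kernel, this]
  · simp only [mem_insert, mem_singleton, not_or] at hk
    have : kernel pu pd k l = 0 := by unfold kernel; split_ifs <;> first | rfl | omega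
    rw [this, mul_zero]

theorem tsum_invariantMeasure_mul_kernel (hpu : 0 < pu) (hpd : 0 < pd) (hsum : pu + pd = 1)
    (l : ℕ) : ∑' k, invariantMeasure pu pd k * kernel pu pd k l = invariantMeasure pu pd l := by
  rw [tsum_mul_kernel]
  rcases l with _ | _ | l <;> simp only [invariantMeasure, kernel] <;> norm_num
  · rw [← ENNReal.ofReal_mul (by positivity), ← ENNReal.ofReal_one]; congr 1; field_simp
  · rw [← ENNReal.ofReal_mul (by positivity), ← ENNReal.ofReal_one,
      ← ENNReal.ofReal_add zero_le_one (by positivity)]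
    congr 1; field_simp; linear_combination hsum
  · rw [← ENNReal.ofReal_mul (by positivity), ← ENNReal.ofReal_mul (by positivity),
      ← ENNReal.ofReal_add (by positivity) (by positivity)]
    congr 1; simp only [div_pow, pow_succ]; field_simp; linear_combination hsum

theorem invariantMeasure_le (hpu : 0 < pu) (hpu1 : pu ≤ 1) (l : ℕ) :
    invariantMeasure pu pd l ≤ ENNReal.ofReal ((pu / pd) ^ l / pu) := by
  rcases eq_or_ne l 0 with rfl | hl
  · simpa [invariantMeasure] using one_le_inv_iff₀.2 ⟨hpu, hpu1⟩
  · simp [invariantMeasure, hl]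

theorem exists_tsum_min_enorm_mul_invariantMeasure_le (hpu : 0 < pu) (hpu1 : pu ≤ 1) {Λ α : ℝ}
    (hΛ : 1 < Λ) (hα0 : 0 < α) (hα2 : α < 2) (hρ : pu / pd = (Λ ^ 2) ^ (-(α / 2))) :
    ∃ C, ∀ b : ℝ, 0 < b → ∑' l : ℕ, min ‖Λ ^ (2 * l)‖ₑ (ENNReal.ofReal b)
      * invariantMeasure pu pd l ≤ ENNReal.ofReal (C * b ^ (1 - α / 2)) := by
  have hΛ2 : 1 < Λ ^ 2 := one_lt_pow₀ hΛ two_ne_zero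
  set K := (Λ ^ 2) ^ (1 - α / 2) / ((Λ ^ 2) ^ (1 - α / 2) - 1) + (1 - (Λ ^ 2) ^ (-(α / 2)))⁻¹
  refine ⟨pu⁻¹ * K, fun b hb => ?_⟩
  calc ∑' l : ℕ, min ‖Λ ^ (2 * l)‖ₑ (ENNReal.ofReal b) * invariantMeasure pu pd l
      ≤ ∑' l : ℕ, ENNReal.ofReal pu⁻¹ * (min (ENNReal.ofReal ((Λ ^ 2) ^ l)) (ENNReal.ofReal b)
          * ENNReal.ofReal (((Λ ^ 2) ^ (-(α / 2))) ^ l)) := ENNReal.tsum_le_tsum fun l => by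
        rw [pow_mul, Real.enorm_of_nonneg (by positivity), mul_left_comm,
          ← ENNReal.ofReal_mul (by positivity), ← hρ, inv_mul_eq_div]
        gcongr
        exact invariantMeasure_le hpu hpu1 l
    _ ≤ ENNReal.ofReal pu⁻¹ * ENNReal.ofReal (K * b ^ (1 - α / 2)) := by
        rw [ENNReal.tsum_mul_left]
        gcongr
        exact tsum_min_pow_mul_rpow_le hΛ2 (by linarith) (by linarith) hb
    _ = ENNReal.ofReal (pu⁻¹ * K * b ^ (1 - α / 2)) := by
        rw [← ENNReal.ofReal_mul (by positivity), mul_assoc]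

def pathPrefix (j : ℕ) (ω : ℕ → ℕ) : Fin (j + 1) → ℕ := fun i => ω i

theorem measurable_pathPrefix (j : ℕ) : Measurable (pathPrefix j) :=
  measurable_pi_lambda _ fun _ => measurable_pi_apply _

theorem pathPrefix_eq_iff {j : ℕ} {a ω : ℕ → ℕ} {b : Fin (j + 1) → ℕ}
    (hab : ∀ i : Fin (j + 1), a i = b i) : pathPrefix j ω = b ↔ ∀ i ≤ j, ω i = a i := by
  simp only [funext_iff, pathPrefix, Fin.forall_iff, ← hab, Nat.lt_succ_iff]

variable {P : Measure (ℕ → ℕ)}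

theorem measure_cylinder (hP : IsLevelChainLaw 1 pu pd (Measure.dirac 0) P) (hpu : 0 ≤ pu)
    (hpd : 0 ≤ pd) (hsum : pu + pd = 1) (j : ℕ) (a : ℕ → ℕ) :
    P {ω | ∀ i ≤ j, ω i = a i}
      = (if a 0 = 0 then 1 else 0) * ∏ i ∈ range j, kernel pu pd (a i) (a (i + 1)) := by
  have h0 : 1 - pu - pd = 0 := by linarith
  rw [hP, Measure.dirac_apply, Set.indicator_apply, ENNReal.ofReal_prod_of_nonneg]
  · congr 1
    · simp [eq_comm]
    · refine prod_congr rfl fun i _ => ?_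
      unfold kernel
      split_ifs <;> simp_all
  · intro i _
    split_ifs <;> linarith

theorem measure_pathPrefix_zero (hP : IsLevelChainLaw 1 pu pd (Measure.dirac 0) P)
    (hpu : 0 ≤ pu) (hpd : 0 ≤ pd) (hsum : pu + pd = 1) (b : Fin 1 → ℕ) :
    P {ω | pathPrefix 0 ω = b} = if b 0 = 0 then 1 else 0 := by
  simp_rw [pathPrefix_eq_iff (a := fun _ => b 0) fun i => by rw [Fin.fin_one_eq_zero i]]
  rw [measure_cylinder hP hpu hpd hsum]
  simp

theorem measure_pathPrefix_snoc (hP : IsLevelChainLaw 1 pu pd (Measure.dirac 0) P)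
    (hpu : 0 ≤ pu) (hpd : 0 ≤ pd) (hsum : pu + pd = 1) {j : ℕ} (b : Fin (j + 1) → ℕ) (l : ℕ) :
    P {ω | pathPrefix (j + 1) ω = Fin.snoc b l}
      = P {ω | pathPrefix j ω = b} * kernel pu pd (b (Fin.last j)) l := by
  obtain ⟨a, ha⟩ :
      ∃ a : ℕ → ℕ, ∀ i : Fin (j + 1 + 1), a i = (Fin.snoc b l : Fin (j + 1 + 1) → ℕ) i :=
    ⟨_, Fin.val_injective.extend_apply (Fin.snoc (α := fun _ => ℕ) b l) 0⟩
  have hja : ∀ i : Fin (j + 1), a i = b i := fun i => by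
    simpa using ha i.castSucc
  simp_rw [pathPrefix_eq_iff ha, pathPrefix_eq_iff hja, measure_cylinder hP hpu hpd hsum,
    prod_range_succ, ← mul_assoc]
  congr 2
  · simpa using hja (Fin.last j)
  · simpa using ha (Fin.last (j + 1))

theorem measure_pathPrefix_mem (j : ℕ) (S : Set (Fin (j + 1) → ℕ)) :
    P {ω | pathPrefix j ω ∈ S} = ∑' b, S.indicator (fun b => P {ω | pathPrefix j ω = b}) b := by
  have hS : MeasurableSet S := S.to_countable.measurableSet
  change P (pathPrefix j ⁻¹' S) = _
  rw [← Measure.map_apply (measurable_pathPrefix j) hS,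
    ← Measure.tsum_indicator_apply_singleton _ _ hS]
  simp_rw [Measure.map_apply (measurable_pathPrefix j) (measurableSet_singleton _)]
  rfl

theorem measure_pathPrefix_mem_and_eval_succ (hP : IsLevelChainLaw 1 pu pd (Measure.dirac 0) P)
    (hpu : 0 ≤ pu) (hpd : 0 ≤ pd) (hsum : pu + pd = 1) {j : ℕ} (S : Set (Fin (j + 1) → ℕ))
    (l : ℕ) :
    P {ω | pathPrefix j ω ∈ S ∧ ω (j + 1) = l}
      = ∑' k, P {ω | pathPrefix j ω ∈ S ∧ ω j = k} * kernel pu pd k l := by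
  have hL : {ω | pathPrefix j ω ∈ S ∧ ω (j + 1) = l}
      = {ω | pathPrefix (j + 1) ω
          ∈ {b : Fin (j + 1 + 1) → ℕ | Fin.init b ∈ S ∧ b (Fin.last _) = l}} := rfl
  have hR : ∀ k, {ω | pathPrefix j ω ∈ S ∧ ω j = k}
      = {ω | pathPrefix j ω ∈ S ∩ {b | b (Fin.last j) = k}} := fun k => rfl
  simp_rw [hL, hR, measure_pathPrefix_mem, ← ENNReal.tsum_mul_right]
  rw [ENNReal.tsum_comm, ← (Fin.snocEquiv fun _ => ℕ).tsum_eq, ENNReal.tsum_prod',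
    ENNReal.tsum_comm]
  refine tsum_congr fun b => ?_
  rw [tsum_eq_single l, tsum_eq_single (b (Fin.last j))]
  · by_cases hb : b ∈ S <;>
      simp [hb, Fin.snocEquiv, measure_pathPrefix_snoc hP hpu hpd hsum]
  · intro k hk
    simp [Ne.symm hk]
  · intro l' hl'
    simp [Fin.snocEquiv, hl']

noncomputable def avoidingMarginal (P : Measure (ℕ → ℕ)) (D : Set ℕ) (j l : ℕ) : ℝ≥0∞ :=
  P ({ω | ω j = l} ∩ {ω | ∀ i ∈ Icc 1 j, ω i ∉ D})

theorem avoidingMarginal_zero (hP : IsLevelChainLaw 1 pu pd (Measure.dirac 0) P)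
    (hpu : 0 ≤ pu) (hpd : 0 ≤ pd) (hsum : pu + pd = 1) (D : Set ℕ) (l : ℕ) :
    avoidingMarginal P D 0 l = if l = 0 then 1 else 0 := by
  have : {ω : ℕ → ℕ | ω 0 = l} ∩ {ω | ∀ i ∈ Icc 1 0, ω i ∉ D}
      = {ω | pathPrefix 0 ω = fun _ => l} := by
    ext ω; simp [funext_iff, pathPrefix]
  rw [avoidingMarginal, this, measure_pathPrefix_zero hP hpu hpd hsum]

theorem forall_mem_Icc_notMem_iff_pathPrefix_mem (D : Set ℕ) (j : ℕ) (ω : ℕ → ℕ) :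
    (∀ i ∈ Icc 1 j, ω i ∉ D)
      ↔ pathPrefix j ω ∈ {b | ∀ i : Fin (j + 1), 1 ≤ (i : ℕ) → b i ∉ D} := by
  simp only [mem_Icc, Set.mem_ofPred_eq, Fin.forall_iff, pathPrefix, Nat.lt_succ_iff]
  exact forall_congr' fun i => ⟨fun h hj h1 => h ⟨h1, hj⟩, fun h hi => h hi.2 hi.1⟩

theorem avoidingMarginal_succ_of_mem (D : Set ℕ) (j : ℕ) {l : ℕ} (hl : l ∈ D) :
    avoidingMarginal P D (j + 1) l = 0 :=
  measure_mono_null (fun ω ⟨hω, hD⟩ => hD (j + 1) (by simp) (hω ▸ hl)) measure_empty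

theorem avoidingMarginal_succ_of_notMem (hP : IsLevelChainLaw 1 pu pd (Measure.dirac 0) P)
    (hpu : 0 ≤ pu) (hpd : 0 ≤ pd) (hsum : pu + pd = 1) (D : Set ℕ) (j : ℕ) {l : ℕ}
    (hl : l ∉ D) :
    avoidingMarginal P D (j + 1) l = ∑' k, avoidingMarginal P D j k * kernel pu pd k l := by
  have hL : {ω : ℕ → ℕ | ω (j + 1) = l} ∩ {ω | ∀ i ∈ Icc 1 (j + 1), ω i ∉ D}
      = {ω | pathPrefix j ω ∈ {b | ∀ i : Fin (j + 1), 1 ≤ (i : ℕ) → b i ∉ D} ∧ ω (j + 1) = l} := by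
    ext ω
    change _ ∧ (∀ i ∈ _, _) ↔ _ ∧ _
    rw [← forall_mem_Icc_notMem_iff_pathPrefix_mem, ← insert_Icc_right_eq_Icc_add_one (by omega),
      forall_mem_insert]
    exact ⟨fun ⟨h, _, hD⟩ => ⟨hD, h⟩, fun ⟨hD, h⟩ => ⟨h, h ▸ hl, hD⟩⟩
  have hR : ∀ k, {ω : ℕ → ℕ | ω j = k} ∩ {ω | ∀ i ∈ Icc 1 j, ω i ∉ D}
      = {ω | pathPrefix j ω ∈ {b | ∀ i : Fin (j + 1), 1 ≤ (i : ℕ) → b i ∉ D} ∧ ω j = k} := by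
    intro k; ext ω
    rw [Set.mem_ofPred_eq, ← forall_mem_Icc_notMem_iff_pathPrefix_mem, and_comm]; rfl
  simp_rw [avoidingMarginal, hL, hR]
  exact measure_pathPrefix_mem_and_eval_succ hP hpu hpd hsum _ l

theorem avoidingMarginal_le_invariantMeasure (hP : IsLevelChainLaw 1 pu pd (Measure.dirac 0) P)
    (hpu : 0 < pu) (hpd : 0 < pd) (hsum : pu + pd = 1) (D : Set ℕ) (j l : ℕ) :
    avoidingMarginal P D j l ≤ invariantMeasure pu pd l := by
  induction j generalizing l with
  | zero =>
    rw [avoidingMarginal_zero hP hpu.le hpd.le hsum]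
    split_ifs with hl <;> simp [invariantMeasure, hl]
  | succ j ih =>
    by_cases hl : l ∈ D
    · simp [avoidingMarginal_succ_of_mem D j hl]
    rw [avoidingMarginal_succ_of_notMem hP hpu.le hpd.le hsum D j hl,
      ← tsum_invariantMeasure_mul_kernel hpu hpd hsum l]
    exact ENNReal.tsum_le_tsum fun k => mul_le_mul_left (ih k) _

theorem tsum_avoidingMarginal_zero_le (hP : IsLevelChainLaw 1 pu pd (Measure.dirac 0) P)
    (hpu : 0 < pu) (hpd : 0 < pd) (hsum : pu + pd = 1) (l : ℕ) :
    ∑' j, avoidingMarginal P {0} j l ≤ invariantMeasure pu pd l := by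
  suffices h : ∀ n l, ∑ j ∈ range n, avoidingMarginal P {0} j l ≤ invariantMeasure pu pd l from
    ENNReal.tsum_le_of_sum_range_le (h · l)
  -- `S n l := ∑ j ∈ range n, avoidingMarginal P {0} j l` satisfies `S (n + 1) 0 = 1` and
  -- `S (n + 1) l = ∑' k, S n k * kernel k l` for `l ≠ 0`; `invariantMeasure` solves both
  intro n
  induction n with
  | zero => simp
  | succ n ih =>
    intro l
    rw [sum_range_succ', avoidingMarginal_zero hP hpu.le hpd.le hsum]
    rcases eq_or_ne l 0 with rfl | hl
    · simp [avoidingMarginal_succ_of_mem, invariantMeasure]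
    have hl' : l ∉ ({0} : Set ℕ) := hl
    simp_rw [avoidingMarginal_succ_of_notMem hP hpu.le hpd.le hsum _ _ hl', if_neg hl, add_zero]
    rw [← Summable.tsum_finsetSum fun _ _ => ENNReal.summable,
      ← tsum_invariantMeasure_mul_kernel hpu hpd hsum l]
    exact ENNReal.tsum_le_tsum fun k => by rw [← sum_mul]; exact mul_le_mul_left (ih k) _

theorem measurable_Vvar (Λ : ℝ) (n : ℕ) : Measurable (Vvar Λ n) :=
  Finset.measurable_sum _ fun j _ =>
    (measurable_of_countable fun l : ℕ => Λ ^ (2 * l)).comp (measurable_pi_apply j)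

theorem lintegral_min_enorm_Vvar_le (hP : IsLevelChainLaw 1 pu pd (Measure.dirac 0) P)
    (hpu : 0 < pu) (hpd : 0 < pd) (hsum : pu + pd = 1) (Λ : ℝ) (n : ℕ) (b : ℝ≥0∞) :
    ∫⁻ ω, min ‖Vvar Λ n ω‖ₑ b ∂P
      ≤ n * ∑' l : ℕ, min ‖Λ ^ (2 * l)‖ₑ b * invariantMeasure pu pd l := by
  have hmeas : ∀ j, Measurable fun ω : ℕ → ℕ => min ‖Λ ^ (2 * ω j)‖ₑ b := fun j =>
    (measurable_of_countable fun l : ℕ => min ‖Λ ^ (2 * l)‖ₑ b).comp (measurable_pi_apply j)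
  calc ∫⁻ ω, min ‖Vvar Λ n ω‖ₑ b ∂P
      ≤ ∫⁻ ω, ∑ j ∈ range n, min ‖Λ ^ (2 * ω j)‖ₑ b ∂P :=
        lintegral_mono fun _ => min_enorm_sum_le _ _ _
    _ = ∑ j ∈ range n, ∑' l : ℕ, min ‖Λ ^ (2 * l)‖ₑ b * avoidingMarginal P ∅ j l := by
        rw [lintegral_finsetSum _ fun j _ => hmeas j]
        refine sum_congr rfl fun j _ => ?_
        rw [← setLIntegral_univ, setLIntegral_comp_eq_tsum P (measurable_pi_apply j) _
          fun l : ℕ => min ‖Λ ^ (2 * l)‖ₑ b]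
        simp [avoidingMarginal]; rfl
    _ ≤ ∑ j ∈ range n, ∑' l : ℕ, min ‖Λ ^ (2 * l)‖ₑ b * invariantMeasure pu pd l := by
        gcongr with j _ l
        exact avoidingMarginal_le_invariantMeasure hP hpu hpd hsum ∅ j l
    _ = n * ∑' l : ℕ, min ‖Λ ^ (2 * l)‖ₑ b * invariantMeasure pu pd l := by
        rw [sum_const, card_range, nsmul_eq_mul]

theorem forall_ne_zero_of_lt_tau0 {ω : ℕ → ℕ} {j : ℕ} (hj : j < tau0 ω) :
    ∀ i ∈ Icc 1 j, ω i ∉ ({0} : Set ℕ) := fun i hi h0 =>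
  ((Nat.sInf_le (⟨(mem_Icc.1 hi).1, h0⟩ : i ∈ {j | 1 ≤ j ∧ ω j = 0})).trans
    (mem_Icc.1 hi).2).not_gt hj

theorem lintegral_min_enorm_Zvar_le (hP : IsLevelChainLaw 1 pu pd (Measure.dirac 0) P)
    (hpu : 0 < pu) (hpd : 0 < pd) (hsum : pu + pd = 1) (Λ : ℝ) (b : ℝ≥0∞) :
    ∫⁻ ω, min ‖Zvar Λ ω‖ₑ b ∂P
      ≤ ∑' l : ℕ, min ‖Λ ^ (2 * l)‖ₑ b * invariantMeasure pu pd l := by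
  set h : ℕ → ℝ≥0∞ := fun l => min ‖Λ ^ (2 * l)‖ₑ b
  set A : ℕ → Set (ℕ → ℕ) := fun j => {ω | ∀ i ∈ Icc 1 j, ω i ∉ ({0} : Set ℕ)}
  have hA : ∀ j, MeasurableSet (A j) := fun j => by measurability
  have hh : ∀ j, Measurable fun ω : ℕ → ℕ => h (ω j) := fun j =>
    (measurable_of_countable h).comp (measurable_pi_apply j)
  calc ∫⁻ ω, min ‖Zvar Λ ω‖ₑ b ∂P
      ≤ ∫⁻ ω, ∑' j, (A j).indicator (fun ω => h (ω j)) ω ∂P := lintegral_mono fun ω => by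
        refine (min_enorm_sum_le _ _ _).trans ((sum_le_sum fun j hj => ?_).trans
          (ENNReal.sum_le_tsum _))
        exact (Set.indicator_of_mem (show ω ∈ A j from
          forall_ne_zero_of_lt_tau0 (mem_range.1 hj)) fun ω => h (ω j)).ge
    _ = ∑' j, ∑' l, h l * avoidingMarginal P {0} j l := by
        rw [lintegral_tsum fun j => ((hh j).indicator (hA j)).aemeasurable]
        refine tsum_congr fun j => ?_
        rw [lintegral_indicator (hA j), setLIntegral_comp_eq_tsum P (measurable_pi_apply j) _ h]
        rfl
    _ = ∑' l, h l * ∑' j, avoidingMarginal P {0} j l := by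
        rw [ENNReal.tsum_comm]; simp_rw [ENNReal.tsum_mul_left]
    _ ≤ ∑' l, h l * invariantMeasure pu pd l := by
        gcongr with l
        exact tsum_avoidingMarginal_zero_le hP hpu hpd hsum l

end LevelChain

theorem exponent_bounds_and_div_eq_rpow {Λ pu pd α : ℝ} (hΛ : 1 < Λ) (hratio1 : 1 < pd / pu)
    (hratio2 : pd / pu < Λ ^ 2) (hα : α = Real.log (pd / pu) / Real.log Λ) :
    0 < α ∧ α < 2 ∧ pu / pd = (Λ ^ 2) ^ (-(α / 2)) := by
  have hlogΛ : 0 < Real.log Λ := Real.log_pos hΛ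
  have hlog : Real.log (pd / pu) < 2 * Real.log Λ := by
    have := Real.log_lt_log (by linarith) hratio2
    rwa [Real.log_pow, Nat.cast_ofNat] at this
  refine ⟨hα ▸ div_pos (Real.log_pos hratio1) hlogΛ, by rw [hα, div_lt_iff₀ hlogΛ]; linarith, ?_⟩
  rw [← Real.rpow_natCast, ← Real.rpow_mul (by linarith), Real.rpow_def_of_pos (by linarith), hα]
  field_simp
  rw [Nat.cast_ofNat, show -(2 * Real.log (pd / pu) / 2) = -Real.log (pd / pu) by ring,
    Real.exp_neg, Real.exp_log (by linarith), inv_div]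

theorem tendsto_mul_abs_sq_div_rpow {a : ℕ → ℝ} {α : ℝ} (hα : 0 < α)
    (ha : Tendsto a atTop (𝓝 0)) :
    Tendsto (fun n : ℕ => n * |a n ^ 2 / (n : ℝ) ^ (2 / α)| ^ (α / 2)) atTop (𝓝 0) := by
  have hlim : Tendsto (fun n => |a n| ^ α) atTop (𝓝 0) := by
    have := (Real.continuousAt_rpow_const 0 α (Or.inr hα.le)).tendsto.comp
      (abs_zero (α := ℝ) ▸ ha.abs)
    rwa [Real.zero_rpow hα.ne'] at this
  refine hlim.congr' ((eventually_ge_atTop 1).mono fun n hn => ?_)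
  have hn0 : (0 : ℝ) < n := by exact_mod_cast hn
  dsimp only
  rw [abs_div, abs_of_pos (Real.rpow_pos_of_pos hn0 _), Real.div_rpow (abs_nonneg _)
    (by positivity), ← Real.rpow_mul hn0.le, abs_pow, ← Real.rpow_natCast,
    ← Real.rpow_mul (abs_nonneg _), Nat.cast_ofNat, mul_div_cancel₀ _ two_ne_zero,
    show 2 / α * (α / 2) = 1 by field_simp, Real.rpow_one, mul_div_cancel₀ _ hn0.ne']

theorem rescaled_Zsum_and_Vn_tendsto_zero_general (Λ pu pd α : ℝ) (hΛ : 1 < Λ)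
    (hpu : 0 < pu) (hpd : 0 < pd) (hsum : pu + pd = 1)
    (hratio1 : 1 < pd / pu) (hratio2 : pd / pu < Λ ^ 2)
    (hα : α = Real.log (pd / pu) / Real.log Λ)
    (P0 : Measure (ℕ → ℕ))
    (hP0 : IsLevelChainLaw 1 pu pd (Measure.dirac 0) P0)
    {Ω' : Type*} [MeasurableSpace Ω'] (Q : Measure Ω')
    (Zs : ℕ → Ω' → ℝ) (hmeas : ∀ k, Measurable (Zs k))
    (hdist : ∀ k, Measure.map (Zs k) Q = Measure.map (Zvar Λ) P0)
    (a : ℕ → ℝ) (ha : Tendsto a atTop (𝓝 (0 : ℝ))) :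
    TendstoInMeasure Q
      (fun (n : ℕ) ω' => (a n) ^ 2 / (n : ℝ) ^ (2 / α) * ∑ k ∈ Finset.Icc 1 n, Zs k ω')
      atTop (fun _ => (0 : ℝ)) ∧
    TendstoInMeasure P0
      (fun (n : ℕ) ω => (a n) ^ 2 / (n : ℝ) ^ (2 / α) * Vvar Λ n ω)
      atTop (fun _ => (0 : ℝ)) := by
  obtain ⟨hα0, hα2, hρ⟩ := exponent_bounds_and_div_eq_rpow hΛ hratio1 hratio2 hα
  obtain ⟨C, hC⟩ := LevelChain.exists_tsum_min_enorm_mul_invariantMeasure_le hpu (by linarith)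
    hΛ hα0 hα2 hρ
  have hscale := tendsto_mul_abs_sq_div_rpow hα0 ha
  refine ⟨tendstoInMeasure_zero_of_lintegral_min_le (C := C)
      (fun n => (Finset.measurable_sum _ fun k _ => hmeas k).aemeasurable) (fun n b hb => ?_)
      hscale,
    tendstoInMeasure_zero_of_lintegral_min_le (C := C)
      (fun n => (LevelChain.measurable_Vvar Λ n).aemeasurable) (fun n b hb => ?_) hscale⟩
  · calc _ ≤ #(Icc 1 n) * ∫⁻ ω, min ‖Zvar Λ ω‖ₑ (ENNReal.ofReal b) ∂P0 :=
          lintegral_min_enorm_sum_le_of_map_eq hmeas hdist _ _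
      _ ≤ n * ENNReal.ofReal (C * b ^ (1 - α / 2)) := by
          rw [Nat.card_Icc, add_tsub_cancel_right]
          gcongr
          exact (LevelChain.lintegral_min_enorm_Zvar_le hP0 hpu hpd hsum Λ _).trans (hC b hb)
  · exact (LevelChain.lintegral_min_enorm_Vvar_le hP0 hpu hpd hsum Λ n _).trans
      (by gcongr; exact hC b hb)

/-- Corollary `biggamma`.  For i.i.d. copies `(Z_k)_{k≥1}` of `Z` and any
positive sequence `a_n → 0`, both `(a_n²/n^{2/α}) Σ_{k=1}^n Z_k → 0` and
`(a_n²/n^{2/α}) V_n → 0` in probability. -/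
theorem rescaled_Zsum_and_Vn_tendsto_zero (Λ pu pd α : ℝ) (hΛ : 1 < Λ)
    (hpu : 0 < pu) (hpd : 0 < pd) (hpu1 : pu < 1) (hpd1 : pd < 1) (hsum : pu + pd = 1)
    (hratio1 : 1 < pd / pu) (hratio2 : pd / pu < Λ ^ 2)
    (hα : α = Real.log (pd / pu) / Real.log Λ)
    (P0 : Measure (ℕ → ℕ)) [IsProbabilityMeasure P0]
    (hP0 : IsLevelChainLaw 1 pu pd (Measure.dirac 0) P0)
    {Ω' : Type*} [MeasurableSpace Ω'] (Q : Measure Ω') [IsProbabilityMeasure Q]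
    (Zs : ℕ → Ω' → ℝ) (hmeas : ∀ k, Measurable (Zs k))
    (hindep : ProbabilityTheory.iIndepFun Zs Q)
    (hdist : ∀ k, Measure.map (Zs k) Q = Measure.map (Zvar Λ) P0)
    (a : ℕ → ℝ) (hapos : ∀ n, 0 < a n) (ha : Tendsto a atTop (𝓝 (0 : ℝ))) :
    TendstoInMeasure Q
      (fun (n : ℕ) ω' => (a n) ^ 2 / (n : ℝ) ^ (2 / α) * ∑ k ∈ Finset.Icc 1 n, Zs k ω')
      atTop (fun _ => (0 : ℝ)) ∧
    TendstoInMeasure P0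
      (fun (n : ℕ) ω => (a n) ^ 2 / (n : ℝ) ^ (2 / α) * Vvar Λ n ω)
      atTop (fun _ => (0 : ℝ)) :=
  rescaled_Zsum_and_Vn_tendsto_zero_general Λ pu pd α hΛ hpu hpd hsum hratio1 hratio2 hα P0 hP0 Q Zs
    hmeas hdist a ha
end
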